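/- Let F be a field of characteristic zero, V an n-dimensional F-vector space, F'/F a field extension, and W ⊆ V ⊗_F F' a line whose Aut(F'/F)-conjugates span V ⊗_F F'. If [F(W) : F] = n, then the natural F-linear map V* → (V* ⊗_F F(W)) / W_{F(W)}^⊥ is an isomorphism, where W_{F(W)} = W ∩ (V ⊗_F F(W)) and W_{F(W)}^⊥ is its annihilator in V* ⊗_F F(W). -/
import Mathlib


open TensorProduct

set_option synthInstance.maxHeartbeats 1000000
set_option maxHeartbeats 1000000

/-- `W` is defined over the intermediate field `M` of `F'/F`, with generating vector `w`. -/
def IsDefinedOverWith (F F' : Type*) [Field F] [Field F'] [Algebra F F']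
    (V : Type*) [AddCommGroup V] [Module F V]
    (M : IntermediateField F F') (W : Submodule F' (F' ⊗[F] V))
    (w : ↥M ⊗[F] V) : Prop :=
  W = Submodule.span F' {LinearMap.rTensor V M.val.toLinearMap w}

def IsDefinedOver (F F' : Type*) [Field F] [Field F'] [Algebra F F']
    (V : Type*) [AddCommGroup V] [Module F V]
    (M : IntermediateField F F') (W : Submodule F' (F' ⊗[F] V)) : Prop :=
  ∃ w : ↥M ⊗[F] V, IsDefinedOverWith F F' V M W w

/-- `F` characteristic zero, `V` of dimension `n`, `W ⊆ F' ⊗ V` a line whose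
`Aut(F'/F)`-conjugates span, with field of definition `M = F(W)` of degree `n` over `F`
and `M`-rational generator `w` of `W_M = W ∩ (V ⊗ M)`.  The natural map
`V* → (V* ⊗ F(W))/W_{F(W)}^⊥` is an isomorphism.  Since the quotient
`(V* ⊗ M)/W_M^⊥` is canonically identified (evaluation on the generator `w` of the line
`W_M`) with `Dual_M(W_M) ≅ M`, this says precisely that the `F`-linear map
`V* → M`, `f ↦ (f ⊗ 1)(w)`, is bijective. -/
theorem dual_mod_annihilator_iso
    (F F' : Type*) [Field F] [CharZero F] [Field F'] [Algebra F F']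
    (V : Type*) [AddCommGroup V] [Module F V] [FiniteDimensional F V]
    (n : ℕ) (hV : Module.finrank F V = n)
    (W : Submodule F' (F' ⊗[F] V))
    (hW : Module.finrank F' ↥W = 1)
    (hspan : Submodule.span F'
      (⋃ σ : F' ≃ₐ[F] F',
        (LinearMap.rTensor V σ.toLinearMap) '' (W : Set (F' ⊗[F] V))) = ⊤)
    (M : IntermediateField F F') (w : ↥M ⊗[F] V)
    (hdef : IsDefinedOverWith F F' V M W w)
    (hmin : ∀ M' : IntermediateField F F', IsDefinedOver F F' V M' W → M ≤ M')
    (hMn : Module.finrank F ↥M = n) :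
    Function.Bijective (fun f : Module.Dual F V =>
      (TensorProduct.rid F ↥M) (LinearMap.baseChange ↥M f w)) := by
  have hdef' : W = Submodule.span F' {LinearMap.rTensor V M.val.toLinearMap w} := hdef
  classical
  have hn : 0 < n := by
    have h1 : Module.finrank F' (F' ⊗[F] V) = n := by
      rw [Module.finrank_baseChange, hV]
    have h2 : Module.finrank F' ↥W ≤ Module.finrank F' (F' ⊗[F] V) :=
      Submodule.finrank_le W
    omega
  have hMfin : FiniteDimensional F ↥M :=
    Module.finite_of_finrank_pos (hMn ▸ hn)
  set L : Module.Dual F V →ₗ[F] ↥M :=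
    { toFun := fun f => (TensorProduct.rid F ↥M) (LinearMap.baseChange ↥M f w)
      map_add' := fun f g => by
        rw [LinearMap.baseChange_add, LinearMap.add_apply, map_add]
      map_smul' := fun c f => by
        rw [LinearMap.baseChange_smul, LinearMap.smul_apply, map_smul]
        rfl } with hL
  have hinj : Function.Injective L := by
    rw [← LinearMap.ker_eq_bot, Submodule.eq_bot_iff]
    intro f hf
    have hf0 : LinearMap.baseChange ↥M f w = 0 :=
      (LinearEquiv.map_eq_zero_iff (TensorProduct.rid F ↥M)).mp (LinearMap.mem_ker.mp hf)
    have hcomm : ∀ x : ↥M ⊗[F] V,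
        LinearMap.baseChange F' f (LinearMap.rTensor V M.val.toLinearMap x)
          = LinearMap.rTensor F M.val.toLinearMap (LinearMap.baseChange ↥M f x) := by
      intro x
      induction x with
      | zero => simp only [map_zero]
      | tmul m v => simp only [LinearMap.rTensor_tmul, LinearMap.baseChange_tmul]
      | add x y hx hy => simp only [map_add, hx, hy]
    have hgen : LinearMap.baseChange F' f (LinearMap.rTensor V M.val.toLinearMap w) = 0 := by
      rw [hcomm, hf0, map_zero]
    have hWker : W ≤ LinearMap.ker (LinearMap.baseChange F' f) := by
      rw [hdef', Submodule.span_le, Set.singleton_subset_iff]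
      exact hgen
    have hconj : ∀ (σ : F' ≃ₐ[F] F') (x : F' ⊗[F] V),
        LinearMap.baseChange F' f (LinearMap.rTensor V σ.toLinearMap x)
          = LinearMap.rTensor F σ.toLinearMap (LinearMap.baseChange F' f x) := by
      intro σ x
      induction x with
      | zero => simp only [map_zero]
      | tmul a v => simp only [LinearMap.rTensor_tmul, LinearMap.baseChange_tmul]
      | add x y hx hy => simp only [map_add, hx, hy]
    have htop : (⊤ : Submodule F' (F' ⊗[F] V)) ≤ LinearMap.ker (LinearMap.baseChange F' f) := by
      rw [← hspan, Submodule.span_le]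
      rintro x hx
      simp only [Set.mem_iUnion, Set.mem_image] at hx
      obtain ⟨σ, y, hyW, rfl⟩ := hx
      have hy0 : LinearMap.baseChange F' f y = 0 := hWker hyW
      rw [SetLike.mem_coe, LinearMap.mem_ker, hconj, hy0, map_zero]
    have hfv : ∀ v : V, f v = 0 := by
      intro v
      have h1 : LinearMap.baseChange F' f ((1 : F') ⊗ₜ[F] v) = 0 :=
        htop Submodule.mem_top
      rw [LinearMap.baseChange_tmul] at h1
      have h2 := congrArg (TensorProduct.rid F F') h1
      rw [TensorProduct.rid_tmul, map_zero, Algebra.smul_def, mul_one] at h2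
      exact (algebraMap F F').injective (by rw [h2, map_zero])
    exact LinearMap.ext hfv
  have hdim : Module.finrank F (Module.Dual F V) = Module.finrank F ↥M := by
    rw [Subspace.dual_finrank_eq, hV, hMn]
  exact ⟨hinj, (LinearMap.injective_iff_surjective_of_finrank_eq_finrank hdim).mp hinj⟩
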